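/- arXiv:1710.00083 — 2 statements merged into one kernel-verified Lean document; each statement's English description precedes it below -/
import Mathlib

section
/- Let G be the threshold graph encoded by a code consisting of t ≥ 0 zeros, followed by a word w that is a concatenation of α copies of a = 01 and β copies of b = 10 in any order, followed by one final (rightmost) digit. Then G has t + 2(α+β) + 1 vertices and exactly (α+β)² + β edges; in particular the number of edges does not depend on t or on the order of the letters a and b in w. -/
/-!
Common definitions: threshold graphs from binary codes, counts of matchings and
independent sets, lex and colex graphs, and almost alternating codes.

A binary code is a `List Bool` whose head is the *leftmost* (most significant,
last added) digit; `true` stands for the digit `1` and `false` for `0`.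
Reading the code from right to left, each digit adds a vertex: a `1` adds a
dominating vertex and a `0` adds an isolated vertex.  Equivalently, the vertex
at position `i` (from the left) is adjacent to every vertex to its right iff
its digit is `1`.  Note that the value of the rightmost digit (the star) never
affects the graph.
-/

/-- The threshold graph encoded by a binary code `σ`. -/
def threshOf (σ : List Bool) : SimpleGraph (Fin σ.length) where
  Adj i j := i ≠ j ∧ σ.get (min i j) = true
  symm := by
    constructor
    intro i j h
    refine ⟨h.1.symm, ?_⟩
    rw [min_comm]
    exact h.2
  loopless := by
    constructor
    intro i h
    exact h.1 rfl

/-- The number of edges of a graph. -/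
noncomputable def edgeCount {V : Type*} (G : SimpleGraph V) : ℕ := Nat.card G.edgeSet

/-- `M` is a matching of `G`: a set of pairwise disjoint edges of `G`. -/
def IsMatchingSet {V : Type*} (G : SimpleGraph V) (M : Finset (Sym2 V)) : Prop :=
  (∀ e ∈ M, e ∈ G.edgeSet) ∧ ∀ e ∈ M, ∀ f ∈ M, e ≠ f → ∀ v : V, v ∈ e → v ∉ f

/-- `m(G)`: the total number of matchings of `G` (including the empty matching). -/
noncomputable def matchCount {V : Type*} (G : SimpleGraph V) : ℕ :=
  Nat.card {M : Finset (Sym2 V) // IsMatchingSet G M}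

/-- `m_k(G)`: the number of matchings of `G` of size `k`. -/
noncomputable def matchCountK {V : Type*} (G : SimpleGraph V) (k : ℕ) : ℕ :=
  Nat.card {M : Finset (Sym2 V) // IsMatchingSet G M ∧ M.card = k}

/-- `i(G)`: the number of independent sets of `G` (including the empty set). -/
noncomputable def indCount {V : Type*} (G : SimpleGraph V) : ℕ :=
  Nat.card {S : Finset V // ∀ u ∈ S, ∀ v ∈ S, ¬ G.Adj u v}

/-- `i_k(G)`: the number of independent sets of `G` of size `k`. -/
noncomputable def indCountK {V : Type*} (G : SimpleGraph V) (k : ℕ) : ℕ :=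
  Nat.card {S : Finset V // (∀ u ∈ S, ∀ v ∈ S, ¬ G.Adj u v) ∧ S.card = k}

/-- Two codes encode the same threshold graph: they have the same length and agree
except possibly in the rightmost (starred) digit. -/
def CodeEquiv (σ τ : List Bool) : Prop := σ.length = τ.length ∧ σ.dropLast = τ.dropLast

/-- Words that are concatenations of copies of the letters `a = 01` and `b = 10`. -/
inductive IsABWord : List Bool → Prop
  | nil : IsABWord []
  | a {w : List Bool} : IsABWord w → IsABWord (false :: true :: w)
  | b {w : List Bool} : IsABWord w → IsABWord (true :: false :: w)

/-- `w` is a concatenation of `α` copies of the letter `a = 01` and `β` copies of the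
letter `b = 10`, in some order. -/
def IsABWordWith (α β : ℕ) (w : List Bool) : Prop :=
  ∃ ls : List (List Bool), (∀ x ∈ ls, x = [false, true] ∨ x = [true, false]) ∧
    ls.count [false, true] = α ∧ ls.count [true, false] = β ∧ w = ls.flatten

/-- A code is almost alternating if (possibly after reinterpreting the starred rightmost
digit) it is an initial constant block followed by a word in the letters `a = 01` and
`b = 10`, either using the rightmost digit as the final digit of the last letter
(unstarred case) or keeping the rightmost digit separate after the word (starred case). -/
def IsAlmostAltCode (σ : List Bool) : Prop :=
  ∃ τ : List Bool, CodeEquiv σ τ ∧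
    ∃ (t : ℕ) (c : Bool) (w : List Bool), IsABWord w ∧
      (τ = List.replicate t c ++ w ∨ ∃ d : Bool, τ = List.replicate t c ++ w ++ [d])

/-- A small almost alternating code: the initial block consists of `0`'s (or is empty). -/
def IsSmallAACode (σ : List Bool) : Prop :=
  ∃ τ : List Bool, CodeEquiv σ τ ∧
    ∃ (t : ℕ) (w : List Bool), IsABWord w ∧
      (τ = List.replicate t false ++ w ∨ ∃ d : Bool, τ = List.replicate t false ++ w ++ [d])

/-- A large almost alternating code: the initial block is a nonempty block of `1`'s. -/
def IsLargeAACode (σ : List Bool) : Prop :=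
  ∃ τ : List Bool, CodeEquiv σ τ ∧
    ∃ (t : ℕ) (w : List Bool), 1 ≤ t ∧ IsABWord w ∧
      (τ = List.replicate t true ++ w ∨ ∃ d : Bool, τ = List.replicate t true ++ w ++ [d])

/-- A code has a bracketed string if (possibly after reinterpreting the starred rightmost
digit) it contains a substring `1 0^j 1` or `0 1^j 0` with `j ≥ 3`. -/
def HasBracketedString (σ : List Bool) : Prop :=
  ∃ τ : List Bool, CodeEquiv σ τ ∧ ∃ (x y : List Bool) (j : ℕ), 3 ≤ j ∧
    (τ = x ++ [true] ++ List.replicate j false ++ [true] ++ y ∨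
     τ = x ++ [false] ++ List.replicate j true ++ [false] ++ y)

/-- A code has a separation issue if it contains two pairs of repeated digits separated by
a substring of odd length, where the first pair is immediately preceded by the opposite
digit and the second pair is followed by at least one further digit. -/
def HasSeparationIssue (σ : List Bool) : Prop :=
  ∃ (x m y : List Bool) (d c : Bool),
    Odd m.length ∧ y ≠ [] ∧ σ = x ++ [!d, d, d] ++ m ++ [c, c] ++ y

/-- The colex graph `C(n,e)`: the graph on `Fin n` whose edges are the first `e` pairs in
the colexicographic order.  The pair `{i, j}` with `i < j` has rank `j(j-1)/2 + i` in
this order. -/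
def colexGraph (n e : ℕ) : SimpleGraph (Fin n) where
  Adj i j := i ≠ j ∧ max i.val j.val * (max i.val j.val - 1) / 2 + min i.val j.val < e
  symm := by
    constructor
    intro i j h
    refine ⟨h.1.symm, ?_⟩
    rw [max_comm j.val i.val, min_comm j.val i.val]
    exact h.2
  loopless := by
    constructor
    intro i h
    exact h.1 rfl

/-- The lex graph `L(n,e)`: the graph on `Fin n` whose edges are the first `e` pairs in
the lexicographic order.  The pair `{i, j}` with `i < j` has rank
`i(n-1) - i(i-1)/2 + (j - i - 1)` in this order. -/
def lexGraph (n e : ℕ) : SimpleGraph (Fin n) where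
  Adj i j := i ≠ j ∧
    min i.val j.val * (n - 1) - min i.val j.val * (min i.val j.val - 1) / 2
      + (max i.val j.val - min i.val j.val - 1) < e
  symm := by
    constructor
    intro i j h
    refine ⟨h.1.symm, ?_⟩
    rw [max_comm j.val i.val, min_comm j.val i.val]
    exact h.2
  loopless := by
    constructor
    intro i h
    exact h.1 rfl

/-!
The vertex at position `i` of a code is adjacent to every vertex on its right when its digit is
`1`, and to none of them otherwise, so the edges are counted by summing, over the `1`s of the
code, the number of digits to their right. Leading zeros contribute nothing. Every letter of `w`
contains exactly one `1`; the letter `k`-th from the right therefore sees the `2(k - 1) + 1`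
digits of the later letters and the final digit, plus one more when it is `b = 10`. Summing over
`k = 1, …, α + β` gives `(α + β)² + β`.
-/

open Finset

theorem edgeCount_eq_card_lt_adj {V : Type*} [LinearOrder V] (G : SimpleGraph V) :
    edgeCount G = Nat.card {p : V × V // p.1 < p.2 ∧ G.Adj p.1 p.2} := by
  refine Nat.card_congr <|
    (Sym2.sortEquiv.subtypeEquiv (q := fun p : {p : V × V // p.1 ≤ p.2} => G.Adj p.1.1 p.1.2)
      fun e => ?_).trans <|
      (Equiv.subtypeSubtypeEquivSubtypeInter _ (fun p : V × V => G.Adj p.1 p.2)).trans <|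
        Equiv.subtypeEquivRight fun p => ?_
  · induction e with | h x y => ?_
    rcases le_total x y with h | h <;> simp [Sym2.sortEquiv, h, G.adj_comm]
  · exact ⟨fun h => ⟨h.1.lt_of_ne h.2.ne, h.2⟩, fun h => ⟨h.1.le, h.2⟩⟩

theorem edgeCount_threshOf_eq_sum (σ : List Bool) :
    edgeCount (threshOf σ) = ∑ i : Fin σ.length, if σ[i] then σ.length - 1 - i else 0 := by
  rw [edgeCount_eq_card_lt_adj, Nat.card_congr (Equiv.subtypeEquivRight
      (q := fun p => p.1 < p.2 ∧ σ[p.1] = true) fun p => ?_),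
    Nat.card_eq_fintype_card, Fintype.card_subtype, card_filter, Fintype.sum_prod_type]
  · refine sum_congr rfl fun i _ => ?_
    by_cases h : σ[i] <;> simp [h, filter_lt_eq_Ioi]
  · exact and_congr_right fun h => by
      simp [threshOf, h.ne, min_eq_left (Fin.le_iff_val_le_val.mp h.le)]

def dominatedPairCount : List Bool → ℕ
  | [] => 0
  | x :: s => (if x then s.length else 0) + dominatedPairCount s

theorem sum_eq_dominatedPairCount (σ : List Bool) :
    ∑ i : Fin σ.length, (if σ[i] then σ.length - 1 - i else 0) = dominatedPairCount σ := by
  induction σ with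
  | nil => rfl
  | cons x s ih =>
    refine (Fin.sum_univ_succ (n := s.length) _).trans ?_
    simp [dominatedPairCount, ← ih, Nat.sub_add_eq, Nat.sub_right_comm]

theorem edgeCount_threshOf (σ : List Bool) : edgeCount (threshOf σ) = dominatedPairCount σ := by
  rw [edgeCount_threshOf_eq_sum, sum_eq_dominatedPairCount]

theorem dominatedPairCount_append (u v : List Bool) :
    dominatedPairCount (u ++ v) =
      dominatedPairCount u + u.count true * v.length + dominatedPairCount v := by
  induction u with
  | nil => simp [dominatedPairCount]
  | cons x u ih =>
    cases x <;> simp [dominatedPairCount, ih]; ring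

theorem dominatedPairCount_replicate_false (t : ℕ) :
    dominatedPairCount (List.replicate t false) = 0 := by
  induction t with
  | zero => rfl
  | succ t ih => simp [List.replicate_succ, dominatedPairCount, ih]

section Letters

variable {ls : List (List Bool)} (hls : ∀ x ∈ ls, x = [false, true] ∨ x = [true, false])
include hls

theorem count_add_count_of_letters :
    ls.count [false, true] + ls.count [true, false] = ls.length := by
  induction ls with
  | nil => rfl
  | cons x ls ih =>
    obtain ⟨rfl | rfl, hrest⟩ := List.forall_mem_cons.mp hls <;> simp [← ih hrest] <;> omega

theorem length_flatten_of_letters : ls.flatten.length = 2 * ls.length := by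
  induction ls with
  | nil => rfl
  | cons x ls ih =>
    obtain ⟨rfl | rfl, hrest⟩ := List.forall_mem_cons.mp hls <;> simp [ih hrest] <;> ring

theorem count_true_flatten_of_letters : ls.flatten.count true = ls.length := by
  induction ls with
  | nil => rfl
  | cons x ls ih =>
    obtain ⟨rfl | rfl, hrest⟩ := List.forall_mem_cons.mp hls <;> simp [ih hrest]

theorem dominatedPairCount_flatten_add_length :
    dominatedPairCount ls.flatten + ls.length = ls.length ^ 2 + ls.count [true, false] := by
  induction ls with
  | nil => rfl
  | cons x ls ih =>
    obtain ⟨rfl | rfl, hrest⟩ := List.forall_mem_cons.mp hls <;>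
      simp [dominatedPairCount, length_flatten_of_letters hrest] <;> linarith [ih hrest]

end Letters

/-- The threshold graph encoded by `t` zeros, followed by a word `w`
made of `α` copies of `a = 01` and `β` copies of `b = 10` (in any order), followed by
one final (rightmost) digit, has `t + 2(α+β) + 1` vertices and exactly `(α+β)² + β`
edges. -/
theorem small_starred_edge_count (t a b : ℕ) (w : List Bool) (d : Bool)
    (hw : IsABWordWith a b w) :
    (List.replicate t false ++ w ++ [d]).length = t + 2 * (a + b) + 1 ∧
      edgeCount (threshOf (List.replicate t false ++ w ++ [d])) = (a + b) ^ 2 + b := by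
  obtain ⟨ls, hls, rfl, rfl, rfl⟩ := hw
  rw [count_add_count_of_letters hls]
  constructor
  · simp [length_flatten_of_letters hls, add_assoc]
  · rw [edgeCount_threshOf, List.append_assoc, dominatedPairCount_append,
      dominatedPairCount_append, dominatedPairCount_replicate_false,
      count_true_flatten_of_letters hls]
    simp [List.count_replicate, dominatedPairCount, dominatedPairCount_flatten_add_length hls]
end

section
/- A threshold graph T(σ) on n vertices with e edges is isomorphic to the colex graph C(n,e) if and only if at most one 0 appears to the right of the leftmost 1 in the code σ (where the rightmost digit of σ may be interpreted as either 0 or 1). -/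
/-!
Write `e = C(k,2) + r` with `r ≤ k < n`. Then `C(n,e)` is a clique on `k` vertices, one more
vertex joined to `r` of them, and isolated vertices: it is the threshold graph of the code
`0^(n-1-k) 1^r 0 1^(k-r)`, which has a single `0` after its leading `1`. A threshold graph
determines its code up to the starred digit: the leading digit records whether the graph has a
dominating vertex, and since dominating (resp. isolated) vertices are twins, an isomorphism may be
assumed to fix the first vertex, which is then peeled off. Conversely, a code with at most one `0`
after its leading `1` is equivalent to a code `0^s 1^a 0 1^b`, whose graph is `C(n, C(a+b,2) + a)`.
-/

lemma choose_two_succ (k : ℕ) : (k + 1).choose 2 = k.choose 2 + k := by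
  rw [Nat.choose_succ_succ', Nat.choose_one_right, add_comm]

lemma choose_two_add_lt_choose_two_add_iff {m M r k : ℕ} (hm : m < M) (hr : r ≤ k) :
    M.choose 2 + m < k.choose 2 + r ↔ M < k ∨ M = k ∧ m < r := by
  have hM := choose_two_succ M
  have hk := choose_two_succ k
  rcases lt_trichotomy M k with hlt | rfl | hgt
  · have := Nat.choose_le_choose 2 (show M + 1 ≤ k from hlt)
    omega
  · omega
  · have := Nat.choose_le_choose 2 (show k + 1 ≤ M from hgt)
    omega

lemma exists_eq_choose_two_add_of_lt {n t : ℕ} (ht : t < n.choose 2) :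
    ∃ k r, r < k ∧ k < n ∧ t = k.choose 2 + r := by
  induction n with
  | zero => simp at ht
  | succ n ih =>
    rw [choose_two_succ] at ht
    by_cases htn : t < n.choose 2
    · obtain ⟨k, r, hrk, hkn, rfl⟩ := ih htn
      exact ⟨k, r, hrk, by omega, rfl⟩
    · exact ⟨n, t - n.choose 2, by omega, by omega, by omega⟩

lemma exists_eq_choose_two_add_of_le {n e : ℕ} (hn : 0 < n) (he : e ≤ n.choose 2) :
    ∃ k r, r ≤ k ∧ k < n ∧ e = k.choose 2 + r := by
  rcases he.lt_or_eq with hlt | rfl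
  · obtain ⟨k, r, hrk, hkn, rfl⟩ := exists_eq_choose_two_add_of_lt hlt
    exact ⟨k, r, hrk.le, hkn, rfl⟩
  · refine ⟨n - 1, n - 1, le_rfl, by omega, ?_⟩
    rw [← choose_two_succ, Nat.sub_add_cancel hn]

lemma edgeCount_congr {V W : Type*} {G : SimpleGraph V} {H : SimpleGraph W} (φ : G ≃g H) :
    edgeCount G = edgeCount H :=
  Nat.card_congr φ.mapEdgeSet

lemma edgeCount_le_choose_two {V : Type*} [Fintype V] (G : SimpleGraph V) :
    edgeCount G ≤ (Fintype.card V).choose 2 := by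
  classical
  rw [edgeCount, Nat.card_eq_fintype_card, ← SimpleGraph.edgeFinset_card]
  exact G.card_edgeFinset_le_card_choose_two

lemma colexGraph_adj {n : ℕ} (e : ℕ) (i j : Fin n) :
    (colexGraph n e).Adj i j ↔ i ≠ j ∧ (max i.1 j.1).choose 2 + min i.1 j.1 < e := by
  rw [Nat.choose_two_right]
  rfl

lemma colexGraph_choose_two_add_adj {n k r : ℕ} (hr : r ≤ k) (i j : Fin n) :
    (colexGraph n (k.choose 2 + r)).Adj i j ↔
      i ≠ j ∧ (max i.1 j.1 < k ∨ max i.1 j.1 = k ∧ min i.1 j.1 < r) := by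
  rw [colexGraph_adj]
  refine and_congr_right fun hij => choose_two_add_lt_choose_two_add_iff ?_ hr
  exact min_lt_max.2 (Fin.val_ne_of_ne hij)

def colexRank {n : ℕ} : Sym2 (Fin n) → ℕ :=
  Sym2.lift ⟨fun i j => (max i.1 j.1).choose 2 + min i.1 j.1, fun i j => by
    simp only [max_comm, min_comm]⟩

lemma colexRank_injOn {n : ℕ} : Set.InjOn (colexRank (n := n)) {z | ¬ z.IsDiag} := by
  rintro ⟨i, j⟩ hij ⟨i', j'⟩ hij' h
  simp only [Set.mem_ofPred_eq, Sym2.mk_isDiag_iff] at hij hij'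
  have hlt := min_lt_max.2 (Fin.val_ne_of_ne hij)
  have hlt' := min_lt_max.2 (Fin.val_ne_of_ne hij')
  change (max i.1 j.1).choose 2 + min i.1 j.1 = (max i'.1 j'.1).choose 2 + min i'.1 j'.1 at h
  have h1 := (choose_two_add_lt_choose_two_add_iff hlt hlt'.le).not.1 h.not_lt
  have h2 := (choose_two_add_lt_choose_two_add_iff hlt' hlt.le).not.1 h.symm.not_lt
  have : (i = i' ∧ j = j') ∨ (i = j' ∧ j = i') := by
    simp only [Fin.ext_iff]; omega
  simpa [Sym2.eq_iff] using this

lemma edgeCount_colexGraph {n e : ℕ} (he : e ≤ n.choose 2) :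
    edgeCount (colexGraph n e) = e := by
  have hrank : ∀ z ∈ (colexGraph n e).edgeSet, colexRank z < e := by
    rintro ⟨i, j⟩ hz
    exact ((colexGraph_adj e i j).1 hz).2
  let f : (colexGraph n e).edgeSet → Fin e := fun z => ⟨colexRank z.1, hrank z.1 z.2⟩
  have hf : f.Bijective := by
    refine ⟨fun z w hzw => Subtype.ext ?_, fun t => ?_⟩
    · exact colexRank_injOn ((colexGraph n e).not_isDiag_of_mem_edgeSet z.2)
        ((colexGraph n e).not_isDiag_of_mem_edgeSet w.2) (Fin.val_eq_of_eq hzw)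
    obtain ⟨k, r, hrk, hkn, ht⟩ := exists_eq_choose_two_add_of_lt (t.2.trans_le he)
    have hadj : (colexGraph n e).Adj ⟨r, by omega⟩ ⟨k, hkn⟩ := by
      rw [colexGraph_adj]
      refine ⟨by simp [Fin.ext_iff]; omega, ?_⟩
      simp only [max_eq_right hrk.le, min_eq_left hrk.le]
      omega
    refine ⟨⟨s(_, _), hadj⟩, Fin.ext ?_⟩
    change (max r k).choose 2 + min r k = t
    rw [max_eq_right hrk.le, min_eq_left hrk.le, ht]
  rw [edgeCount, Nat.card_congr (Equiv.ofBijective f hf), Nat.card_eq_fintype_card,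
    Fintype.card_fin]

namespace SimpleGraph

variable {V W : Type*} {G : SimpleGraph V} {H : SimpleGraph W}

lemma Iso.forall_adj_iff_apply (ψ : G ≃g H) {v : V} {p : Prop}
    (hv : ∀ x, x ≠ v → (G.Adj v x ↔ p)) : ∀ y, y ≠ ψ v → (H.Adj (ψ v) y ↔ p) := by
  intro y hy
  rw [← ψ.apply_symm_apply y, ψ.map_adj_iff]
  exact hv _ fun h => hy (by rw [← h, ψ.apply_symm_apply])

def swapTwins [DecidableEq V] (G : SimpleGraph V) (u v : V)
    (h : ∀ x, x ≠ u → x ≠ v → (G.Adj u x ↔ G.Adj v x)) : G ≃g G where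
  toEquiv := Equiv.swap u v
  map_rel_iff' {a b} := by
    simp only [Equiv.swap_apply_def]
    split_ifs <;> subst_vars <;> grind [SimpleGraph.adj_comm, SimpleGraph.irrefl]

lemma nonempty_iso_comap_succ {n m : ℕ} {G : SimpleGraph (Fin (n + 1))}
    {H : SimpleGraph (Fin (m + 1))} (ψ : G ≃g H) (hψ : ψ 0 = 0) :
    Nonempty (G.comap Fin.succ ≃g H.comap Fin.succ) := by
  let e := ((finSuccEquiv n).symm.trans ψ.toEquiv).trans (finSuccEquiv m)
  have he : ∀ i, (Equiv.removeNone e i).succ = ψ i.succ := by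
    intro i
    obtain ⟨j, hj⟩ := Fin.exists_succ_eq.2 (hψ ▸ ψ.injective.ne (Fin.succ_ne_zero i))
    have := Equiv.removeNone_some (e := e) (x := i) ⟨j, by simp [e, hj]⟩
    simpa [e, ← hj] using this
  exact ⟨⟨Equiv.removeNone e, fun {i j} => by simp [he]; exact ψ.map_adj_iff⟩⟩

end SimpleGraph

namespace CodeEquiv

lemma trans {σ τ υ : List Bool} (h : CodeEquiv σ τ) (h' : CodeEquiv τ υ) : CodeEquiv σ υ :=
  ⟨h.1.trans h'.1, h.2.trans h'.2⟩

lemma cons {l m : List Bool} (c : Bool) (hl : l ≠ []) (h : CodeEquiv l m) :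
    CodeEquiv (c :: l) (c :: m) := by
  have hm : m ≠ [] := by
    rintro rfl
    exact hl (List.eq_nil_of_length_eq_zero h.1)
  refine ⟨by simp [h.1], ?_⟩
  rw [List.dropLast_cons_of_ne_nil hl, List.dropLast_cons_of_ne_nil hm, h.2]

end CodeEquiv

lemma threshOf_adj {σ : List Bool} (i j : Fin σ.length) :
    (threshOf σ).Adj i j ↔ i ≠ j ∧ σ[min i.1 j.1] = true :=
  Iff.rfl

lemma threshOf_adj_iff_dropLast {σ : List Bool} (i j : Fin σ.length) :
    (threshOf σ).Adj i j ↔ i ≠ j ∧ σ.dropLast[min i.1 j.1]? = some true := by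
  rw [threshOf_adj]
  refine and_congr_right fun hij => ?_
  have : min i.1 j.1 < σ.length - 1 := by
    have := Fin.val_ne_of_ne hij; omega
  simp [this]

lemma nonempty_iso_of_codeEquiv {σ τ : List Bool} (h : CodeEquiv σ τ) :
    Nonempty (threshOf σ ≃g threshOf τ) :=
  ⟨⟨finCongr h.1, fun {i j} => by simp [threshOf_adj_iff_dropLast, h.2]⟩⟩

lemma threshOf_cons_adj_zero {c : Bool} {l : List Bool} {j : Fin (l.length + 1)} (hj : j ≠ 0) :
    (threshOf (c :: l)).Adj 0 j ↔ c = true := by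
  simp [threshOf_adj, hj.symm]

lemma threshOf_cons_comap_succ (c : Bool) (l : List Bool) :
    (threshOf (c :: l)).comap Fin.succ = threshOf l := by
  ext i j
  simp [threshOf_adj, Fin.succ_inj, Nat.succ_min_succ]

lemma eq_of_forall_threshOf_cons_adj_iff {c d : Bool} {m : List Bool} (hm : m ≠ [])
    (w : Fin (m.length + 1)) (hw : ∀ y, y ≠ w → ((threshOf (d :: m)).Adj w y ↔ c = true)) :
    c = d := by
  have hpos : 0 < m.length := List.length_pos_iff.2 hm
  by_cases hw0 : w = 0
  · subst hw0
    have := hw (Fin.succ ⟨0, hpos⟩) (Fin.succ_ne_zero _)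
    rw [threshOf_cons_adj_zero (Fin.succ_ne_zero _)] at this
    exact Bool.eq_iff_iff.2 this.symm
  · have := hw 0 (Ne.symm hw0)
    rw [SimpleGraph.adj_comm, threshOf_cons_adj_zero hw0] at this
    exact Bool.eq_iff_iff.2 this.symm

open SimpleGraph in
lemma codeEquiv_of_iso {σ τ : List Bool} (ψ : threshOf σ ≃g threshOf τ) :
    CodeEquiv σ τ := by
  have hlen : σ.length = τ.length := Fin.equiv_iff_eq.1 ⟨ψ.toEquiv⟩
  induction σ generalizing τ with
  | nil => exact ⟨hlen, by rw [List.eq_nil_of_length_eq_zero hlen.symm]⟩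
  | cons c l ih =>
    obtain _ | ⟨d, m⟩ := τ
    · simp at hlen
    rcases eq_or_ne l [] with rfl | hl
    · obtain rfl : m = [] := List.eq_nil_of_length_eq_zero (by simpa using hlen.symm)
      exact ⟨hlen, rfl⟩
    have hm : m ≠ [] := by
      rintro rfl
      exact hl (List.eq_nil_of_length_eq_zero (by simpa using hlen))
    obtain rfl : c = d := eq_of_forall_threshOf_cons_adj_iff hm (ψ 0)
      (ψ.forall_adj_iff_apply fun _ => threshOf_cons_adj_zero)
    have hu := ψ.symm.forall_adj_iff_apply fun _ => threshOf_cons_adj_zero (l := m)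
    let ψ₀ := (swapTwins _ 0 (ψ.symm 0) fun x hx hx' =>
      (threshOf_cons_adj_zero hx).trans (hu x hx').symm).trans ψ
    obtain ⟨φ⟩ := nonempty_iso_comap_succ ψ₀ (by simp [ψ₀, swapTwins])
    rw [threshOf_cons_comap_succ, threshOf_cons_comap_succ] at φ
    exact (ih φ (by simpa using hlen)).cons c hl

lemma codeEquiv_iff_nonempty_iso {σ τ : List Bool} :
    CodeEquiv σ τ ↔ Nonempty (threshOf σ ≃g threshOf τ) :=
  ⟨nonempty_iso_of_codeEquiv, fun ⟨ψ⟩ => codeEquiv_of_iso ψ⟩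

def colexCode (s a b : ℕ) : List Bool :=
  List.replicate s false ++ List.replicate a true ++ false :: List.replicate b true

lemma length_colexCode (s a b : ℕ) : (colexCode s a b).length = s + a + 1 + b := by
  simp [colexCode]; omega

lemma getElem_colexCode {s a b v : ℕ} (hv : v < (colexCode s a b).length) :
    (colexCode s a b)[v] = true ↔ s ≤ v ∧ v ≠ s + a := by
  simp only [colexCode, List.getElem_append, List.getElem_replicate, List.getElem_cons,
    List.length_append, List.length_replicate]
  split_ifs <;> simp <;> omega

lemma nonempty_iso_colexGraph {s a b n e : ℕ} (hn : (colexCode s a b).length = n)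
    (he : (a + b).choose 2 + a = e) :
    Nonempty (threshOf (colexCode s a b) ≃g colexGraph n e) := by
  subst hn he
  have hlen := length_colexCode s a b
  -- the `a` ones go to `0, …, a-1`, the lone zero to `a+b`, the trailing ones to
  -- `a, …, a+b-1`, and the leading zeros to the isolated vertices `a+b+1, …`
  let f : ℕ → ℕ := fun v =>
    if v < s then a + b + 1 + v else if v < s + a then v - s
    else if v = s + a then a + b else v - s - 1
  have hf : ∀ v, v < s + a + 1 + b → f v < s + a + 1 + b := by
    intro v hv; simp only [f]; split_ifs <;> omega
  let φ : Fin (colexCode s a b).length → Fin (colexCode s a b).length :=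
    fun i => ⟨f i, (hf i (i.2.trans_eq hlen)).trans_eq hlen.symm⟩
  have hφ : φ.Injective := by
    intro i j hij
    simp only [φ, f, Fin.mk.injEq] at hij
    ext; split_ifs at hij <;> omega
  refine ⟨⟨Equiv.ofBijective φ (Finite.injective_iff_bijective.1 hφ), fun {i j} => ?_⟩⟩
  rw [Equiv.ofBijective_apply, Equiv.ofBijective_apply,
    colexGraph_choose_two_add_adj (Nat.le_add_right a b), threshOf_adj, getElem_colexCode,
    hφ.ne_iff]
  refine and_congr_right fun hij => ?_
  have := Fin.val_ne_of_ne hij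
  simp only [φ, f]
  split_ifs <;> omega

lemma count_false_dropWhile_colexCode_le (s a b : ℕ) :
    ((colexCode s a b).dropWhile (!·)).count false ≤ 1 := by
  induction s with
  | zero =>
    refine ((List.dropWhile_suffix _).sublist.count_le false).trans ?_
    simp [colexCode, List.count_replicate]
  | succ s ih => simpa [colexCode, List.replicate_succ] using ih

lemma exists_codeEquiv_true_cons_colexCode {l : List Bool} (hl : l.count false ≤ 1) :
    ∃ a b, CodeEquiv (true :: l) (colexCode 0 a b) := by
  induction l with
  | nil => exact ⟨0, 0, rfl, rfl⟩
  | cons x l ih =>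
    cases x
    · obtain ⟨k, rfl⟩ : ∃ k, l = List.replicate k true := by
        refine ⟨l.length, List.eq_replicate_of_mem fun b hb => ?_⟩
        have : false ∉ l := List.count_eq_zero.1 (by simpa using hl)
        cases b <;> simp_all
      exact ⟨1, k, rfl, rfl⟩
    · obtain ⟨a, b, h⟩ := ih (by simpa using hl)
      exact ⟨a + 1, b, h.cons true (List.cons_ne_nil _ _)⟩

lemma exists_codeEquiv_colexCode {τ : List Bool} (hτ : τ ≠ [])
    (h : (τ.dropWhile (!·)).count false ≤ 1) : ∃ s a b, CodeEquiv τ (colexCode s a b) := by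
  induction τ with
  | nil => exact absurd rfl hτ
  | cons x τ ih =>
    cases x
    · rcases eq_or_ne τ [] with rfl | hτ'
      · exact ⟨0, 0, 0, rfl, rfl⟩
      obtain ⟨s, a, b, h'⟩ := ih hτ' (by simpa using h)
      exact ⟨s + 1, a, b, h'.cons false hτ'⟩
    · obtain ⟨a, b, h'⟩ := exists_codeEquiv_true_cons_colexCode (by simpa using h)
      exact ⟨0, a, b, h'⟩

lemma edgeCount_threshOf_colexCode (s a b : ℕ) :
    edgeCount (threshOf (colexCode s a b)) = (a + b).choose 2 + a := by
  obtain ⟨ξ⟩ := nonempty_iso_colexGraph (s := s) (a := a) (b := b) rfl rfl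
  rw [edgeCount_congr ξ, edgeCount_colexGraph]
  have := Nat.choose_le_choose 2 (show a + b + 1 ≤ (colexCode s a b).length by
    rw [length_colexCode]; omega)
  rw [choose_two_succ] at this
  omega

/-- A threshold graph `T(σ)` on `n` vertices with `e` edges is
isomorphic to the colex graph `C(n,e)` if and only if at most one `0` appears to the
right of the leftmost `1` in the code `σ` (where the rightmost digit may be
interpreted as either `0` or `1`). -/
theorem colex_iff_at_most_one_zero (σ : List Bool) :
    Nonempty (threshOf σ ≃g colexGraph σ.length (edgeCount (threshOf σ))) ↔
      ∃ τ : List Bool, CodeEquiv σ τ ∧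
        (τ.dropWhile (fun b => !b)).count false ≤ 1 := by
  rcases eq_or_ne σ [] with rfl | hσ
  · exact iff_of_true ⟨⟨Equiv.refl _, fun {i} => i.elim0⟩⟩
      ⟨[], ⟨rfl, rfl⟩, zero_le_one⟩
  constructor
  · rintro ⟨φ⟩
    have hle := edgeCount_le_choose_two (threshOf σ)
    rw [Fintype.card_fin] at hle
    obtain ⟨k, r, hrk, hkn, he⟩ :=
      exists_eq_choose_two_add_of_le (List.length_pos_iff.2 hσ) hle
    obtain ⟨ξ⟩ := nonempty_iso_colexGraph (s := σ.length - 1 - k) (a := r) (b := k - r)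
      (n := σ.length) (e := edgeCount (threshOf σ))
      (by rw [length_colexCode]; omega) (by rw [he, Nat.add_sub_cancel' hrk])
    refine ⟨_, codeEquiv_iff_nonempty_iso.2 ⟨φ.trans ξ.symm⟩, ?_⟩
    exact count_false_dropWhile_colexCode_le _ _ _
  · rintro ⟨τ, hστ, hτ⟩
    have hτ₀ : τ ≠ [] := fun h => hσ (List.eq_nil_of_length_eq_zero (by simp [hστ.1, h]))
    obtain ⟨s, a, b, hτc⟩ := exists_codeEquiv_colexCode hτ₀ hτ
    have hσc := hστ.trans hτc
    obtain ⟨ρ⟩ := codeEquiv_iff_nonempty_iso.1 hσc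
    obtain ⟨ξ⟩ := nonempty_iso_colexGraph hσc.1.symm rfl
    rw [edgeCount_congr ρ, edgeCount_threshOf_colexCode]
    exact ⟨ρ.trans ξ⟩
end
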